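/- Let e : ℕ → ℝ be a sequence with e(1) ≠ 0 and e(n) ≥ 0 for all but finitely many n, such that the Dirichlet series D(s) = Σ_{n≥1} e(n) n^{-s} has finite abscissa of convergence. Suppose further that for some integer k ≥ 2 the function (2π)^{-2s} Γ(s) Γ(s − k + 2) D(s) extends to an entire function of s. Then we reach a contradiction; i.e., no such sequence exists. -/

import Mathlib

/-!
Since `1/Γ` is entire, `D(s) = (2π)^{2s} Γ(s)⁻¹ Γ(s-k+2)⁻¹ G(s)` continues to an entire function,
and replacing `e` by its positive part changes `D` only by an entire Dirichlet polynomial.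
Landau: a Dirichlet series `∑ aₘ m^{-s}` with `aₘ ≥ 0` that continues to an entire function `F`
converges absolutely everywhere. Indeed, expanding `F` around a point `c` of absolute convergence
gives, for real `y < c`, `F(y) = ∑ₙ ∑ₘ (c-y)ⁿ/n! (log m)ⁿ aₘ m^{-c}`, a double series of
nonnegative terms whose column sums are `aₘ m^{-y}`. So `D` converges left of its abscissa `σc`.
-/

open Complex Filter LSeries

open scoped ComplexOrder Nat

lemma Complex.summable_tsum_swap_of_nonneg {α β : Type*} {Q : α → β → ℂ} (hQ : ∀ i j, 0 ≤ Q i j)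
    (hrow : ∀ i, Summable (Q i)) (hsum : Summable fun i ↦ ∑' j, Q i j) :
    Summable fun j ↦ ∑' i, Q i j := by
  obtain ⟨R, hR, rfl⟩ : ∃ R : α → β → ℝ, (∀ i j, 0 ≤ R i j) ∧ Q = fun i j ↦ (R i j : ℂ) :=
    ⟨fun i j ↦ (Q i j).re, fun i j ↦ (nonneg_iff.mp (hQ i j)).1,
      funext₂ fun i j ↦ eq_re_of_ofReal_le (ofReal_zero ▸ hQ i j)⟩
  simp only [← ofReal_tsum, summable_ofReal] at hrow hsum ⊢
  have hR₀ : 0 ≤ Function.uncurry R := fun p ↦ hR p.1 p.2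
  have hRs : Summable (Function.uncurry R) := (summable_prod_of_nonneg hR₀).mpr ⟨hrow, hsum⟩
  exact ((summable_prod_of_nonneg fun p ↦ hR₀ p.swap).mp hRs.prod_symm).2

namespace LSeries

lemma logMul_iterate_apply (f : ℕ → ℂ) (n m : ℕ) : (logMul^[n] f) m = log m ^ n * f m := by
  induction n with
  | zero => simp
  | succ n ih => rw [Function.iterate_succ_apply', logMul, ih, pow_succ]; ring

lemma logMul_iterate_nonneg {f : ℕ → ℂ} (hf : 0 ≤ f) (n : ℕ) : 0 ≤ logMul^[n] f := fun m ↦ by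
  rw [logMul_iterate_apply, ← natCast_log]
  exact mul_nonneg (pow_nonneg (zero_le_real.mpr (Real.log_natCast_nonneg m)) n) (hf m)

lemma hasSum_term_logMul_iterate (f : ℕ → ℂ) (c s : ℂ) (m : ℕ) :
    HasSum (fun n ↦ (c - s) ^ n / n ! * term (logMul^[n] f) c m) (term f s m) := by
  rcases eq_or_ne m 0 with rfl | hm
  · simp
  have hm' : (m : ℂ) ≠ 0 := Nat.cast_ne_zero.mpr hm
  have hpow : (m : ℂ) ^ c = exp ((c - s) * log m) * (m : ℂ) ^ s := by
    rw [cpow_def_of_ne_zero hm', cpow_def_of_ne_zero hm', ← exp_add]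
    ring_nf
  have hexp := (NormedSpace.expSeries_div_hasSum_exp ((c - s) * log m)).mul_right (f m / m ^ c)
  rw [← exp_eq_exp_ℂ] at hexp
  have hval : f m / (m : ℂ) ^ s = exp ((c - s) * log m) * (f m / m ^ c) := by
    rw [hpow]
    field_simp
  rw [term_of_ne_zero hm, hval]
  refine hexp.congr_fun fun n ↦ ?_
  rw [term_of_ne_zero hm, logMul_iterate_apply, mul_pow]
  ring

section Extension

variable {f : ℕ → ℂ} {F : ℂ → ℂ} {x : ℝ}

lemma hasSum_logMul_iterate_of_differentiable_of_eqOn (hF : Differentiable ℂ F)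
    (hx : abscissaOfAbsConv f ≤ x) (hFeq : {s | x < s.re}.EqOn F (LSeries f)) {c : ℂ}
    (hc : x < c.re) (s : ℂ) :
    HasSum (fun n ↦ (c - s) ^ n / n ! * LSeries (logMul^[n] f) c) (F s) := by
  have hopen : IsOpen {s : ℂ | x < s.re} := continuous_re.isOpen_preimage _ isOpen_Ioi
  refine (Complex.hasSum_taylorSeries_of_entire hF c s).congr_fun fun n ↦ ?_
  rw [hFeq.iteratedDeriv_of_isOpen hopen n hc,
    LSeries_iteratedDeriv n (hx.trans_lt (EReal.coe_lt_coe_iff.mpr hc)), smul_eq_mul, smul_eq_mul,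
    ← neg_sub c s, neg_pow]
  have hsign : ((-1 : ℂ) ^ n) * (-1) ^ n = 1 := by rw [← mul_pow]; norm_num
  linear_combination (-(c - s) ^ n / n ! * LSeries (logMul^[n] f) c) * hsign

lemma abscissaOfAbsConv_eq_bot_of_nonneg_of_differentiable_of_eqOn (hf : 0 ≤ f)
    (hF : Differentiable ℂ F) (hx : abscissaOfAbsConv f ≤ x)
    (hFeq : {s | x < s.re}.EqOn F (LSeries f)) :
    abscissaOfAbsConv f = ⊥ := by
  refine le_bot_iff.mp <| abscissaOfAbsConv_le_of_forall_lt_LSeriesSummable' fun y _ ↦ ?_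
  set c : ℝ := max x y + 1
  have hxc : x < c := (le_max_left x y).trans_lt (lt_add_one _)
  have hyc : y ≤ c := (le_max_right x y).trans (le_add_of_nonneg_right zero_le_one)
  have habs : abscissaOfAbsConv f < (c : ℂ).re := hx.trans_lt (by simpa using hxc)
  set Q : ℕ → ℕ → ℂ := fun n m ↦ (c - y : ℂ) ^ n / n ! * term (logMul^[n] f) c m
  have hQ : ∀ n m, 0 ≤ Q n m := fun n m ↦ by
    refine mul_nonneg (div_nonneg (pow_nonneg ?_ n) (by positivity)) ?_
    · exact_mod_cast sub_nonneg.mpr hyc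
    · exact term_nonneg (logMul_iterate_nonneg hf n m) c
  have hrow : ∀ n, Summable (Q n) := fun n ↦
    (LSeriesSummable_of_abscissaOfAbsConv_lt_re
      (absicssaOfAbsConv_logPowMul.symm ▸ habs : abscissaOfAbsConv (logMul^[n] f) < _)).mul_left _
  have hsum : Summable fun n ↦ ∑' m, Q n m := by
    simp only [Q, tsum_mul_left]
    exact (hasSum_logMul_iterate_of_differentiable_of_eqOn hF hx hFeq (by simpa using hxc) y).summable
  exact (summable_tsum_swap_of_nonneg hQ hrow hsum).congr fun m ↦
    (hasSum_term_logMul_iterate f c y m).tsum_eq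

end Extension

lemma abscissaOfAbsConv_eq_bot_of_eventuallyEq_zero {f : ℕ → ℂ} (hf : f =ᶠ[atTop] 0) :
    abscissaOfAbsConv f = ⊥ := by
  rw [abscissaOfAbsConv_congr' hf]
  exact le_bot_iff.mp <| abscissaOfAbsConv_le_of_forall_lt_LSeriesSummable' fun _ _ ↦
    LSeriesSummable_zero

lemma exists_differentiable_eqOn_of_eventuallyEq {f g : ℕ → ℂ} (hfg : f =ᶠ[atTop] g)
    {F : ℂ → ℂ} (hF : Differentiable ℂ F) {x : ℝ} (hx : abscissaOfAbsConv f ≤ x)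
    (hFeq : {s | x < s.re}.EqOn F (LSeries f)) :
    ∃ G : ℂ → ℂ, Differentiable ℂ G ∧ {s | x < s.re}.EqOn G (LSeries g) := by
  have hbot : abscissaOfAbsConv (f - g) = ⊥ :=
    abscissaOfAbsConv_eq_bot_of_eventuallyEq_zero (hfg.mono fun n hn ↦ sub_eq_zero.mpr hn)
  refine ⟨F - LSeries (f - g), hF.sub ?_, fun s hs ↦ ?_⟩
  · simpa [hbot, differentiableOn_univ] using LSeries_differentiableOn (f - g)
  · rw [Pi.sub_apply, hFeq hs, ← LSeries_sub
      (LSeriesSummable_of_abscissaOfAbsConv_lt_re (hx.trans_lt (EReal.coe_lt_coe_iff.mpr hs)))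
      (LSeriesSummable_of_abscissaOfAbsConv_lt_re (by simp [hbot])), sub_sub_cancel]

end LSeries

lemma exists_differentiable_eqOn_LSeries_of_gammaFactor {f : ℕ → ℂ} {k : ℂ} {G : ℂ → ℂ}
    (hG : Differentiable ℂ G) {σ : ℝ}
    (hGeq : ∀ s : ℂ, σ < s.re →
      G s = (2 * Real.pi : ℂ) ^ (-2 * s) * Gamma s * Gamma (s - k + 2) * LSeries f s) :
    ∃ F : ℂ → ℂ, Differentiable ℂ F ∧ ∃ x ≥ σ, {s | x < s.re}.EqOn F (LSeries f) := by
  have h2π : (2 * Real.pi : ℂ) ≠ 0 := by simp [Real.pi_ne_zero]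
  refine ⟨fun s ↦ (2 * Real.pi : ℂ) ^ (2 * s) * (Gamma s)⁻¹ * (Gamma (s - k + 2))⁻¹ * G s,
    ?_, max σ (max 0 (k.re - 2)), le_max_left _ _, fun s hs ↦ ?_⟩
  · refine ((((differentiable_id.const_mul 2).const_cpow (Or.inl h2π)).mul
      differentiable_one_div_Gamma).mul ?_).mul hG
    exact differentiable_one_div_Gamma.comp ((differentiable_id.sub_const k).add_const 2)
  simp only [Set.mem_ofPred_eq, max_lt_iff] at hs
  obtain ⟨hσ, h0, hk⟩ := hs
  have hΓ : Gamma s ≠ 0 := Gamma_ne_zero_of_re_pos h0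
  have hΓk : Gamma (s - k + 2) ≠ 0 := Gamma_ne_zero_of_re_pos (by rw [add_re, sub_re, re_ofNat]; linarith)
  have hpow : (2 * Real.pi : ℂ) ^ (-2 * s) = ((2 * Real.pi : ℂ) ^ (2 * s))⁻¹ := by
    rw [neg_mul, cpow_neg]
  dsimp only
  rw [hGeq s hσ, hpow]
  field_simp

theorem no_such_sequence_general (e : ℕ → ℝ) (σc : ℝ) (k : ℤ)
    (hnn : ∀ᶠ n in atTop, 0 ≤ e n)
    (hconv : ∀ s : ℂ, σc < s.re → LSeriesSummable (fun n => (e n : ℂ)) s)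
    (hdiv : ∀ σ : ℝ, σ < σc → ¬ LSeriesSummable (fun n => (e n : ℂ)) (σ : ℂ))
    (G : ℂ → ℂ) (hG : Differentiable ℂ G)
    (hGeq : ∀ s : ℂ, σc < s.re →
      G s = (2 * Real.pi : ℂ) ^ (-2 * s) * Complex.Gamma s * Complex.Gamma (s - k + 2) *
        LSeries (fun n => (e n : ℂ)) s) :
    False := by
  obtain ⟨F, hF, x, hσx, hFeq⟩ := exists_differentiable_eqOn_LSeries_of_gammaFactor hG hGeq
  have habs : abscissaOfAbsConv (fun n ↦ (e n : ℂ)) ≤ x :=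
    abscissaOfAbsConv_le_of_forall_lt_LSeriesSummable fun y hy ↦
      hconv y (by simpa using hσx.trans_lt hy)
  set a : ℕ → ℂ := fun n ↦ (max (e n) 0 : ℝ)
  have ha : 0 ≤ a := fun n ↦ zero_le_real.mpr (le_max_right _ _)
  have hea : (fun n ↦ (e n : ℂ)) =ᶠ[atTop] a := hnn.mono fun n hn ↦ by simp [a, hn]
  obtain ⟨Fa, hFa, hFaeq⟩ := exists_differentiable_eqOn_of_eventuallyEq hea hF habs hFeq
  have hbot : abscissaOfAbsConv a = ⊥ :=
    abscissaOfAbsConv_eq_bot_of_nonneg_of_differentiable_of_eqOn ha hFa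
      (abscissaOfAbsConv_congr' hea ▸ habs) hFaeq
  refine hdiv (σc - 1) (sub_one_lt σc) <| LSeriesSummable.congr' _ hea.symm <|
    LSeriesSummable_of_abscissaOfAbsConv_lt_re ?_
  rw [hbot, ofReal_re]
  exact EReal.bot_lt_coe _

/-- Core analytic step of the Kohnen–Sengupta method: there is no real sequence `e` with
`e 1 ≠ 0`, `e n ≥ 0` for all but finitely many `n`, whose Dirichlet series
`D(s) = ∑_{n≥1} e(n) n^{-s}` has finite abscissa of convergence `σc` and is such that
`(2π)^{-2s} Γ(s) Γ(s - k + 2) D(s)` (for some integer `k ≥ 2`) extends to an entire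
function of `s`. -/
theorem no_such_sequence (e : ℕ → ℝ) (σc : ℝ) (k : ℤ) (hk : 2 ≤ k)
    (he1 : e 1 ≠ 0)
    (hnn : ∀ᶠ n in atTop, 0 ≤ e n)
    (hconv : ∀ s : ℂ, σc < s.re → LSeriesSummable (fun n => (e n : ℂ)) s)
    (hdiv : ∀ σ : ℝ, σ < σc → ¬ LSeriesSummable (fun n => (e n : ℂ)) (σ : ℂ))
    (G : ℂ → ℂ) (hG : Differentiable ℂ G)
    (hGeq : ∀ s : ℂ, σc < s.re →
      G s = (2 * Real.pi : ℂ) ^ (-2 * s) * Complex.Gamma s * Complex.Gamma (s - k + 2) *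
        LSeries (fun n => (e n : ℂ)) s) :
    False :=
  no_such_sequence_general e σc k hnn hconv hdiv G hG hGeq
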